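/- Let h be a log-concave probability density on ℝ with median w and mean μ, and suppose ∫ₓ^∞ h = ν with ν ∈ (0, 1/6). Then ∫ₓ^∞ (t − μ)² h(t) dt ≤ (5ν/(4 h(w)²))·(ln ν)². -/

import Mathlib

/-!
Write `G s = ∫_{t > s} h t` for the tail mass. Log-concavity makes the hazard rate `h / G`
nondecreasing, so beyond the median `w` it is at least `h w / G w = 2 h(w) =: c`, and `G` decays
at least like `e^{-c (s - w)} / 2`. In particular `c (x - w) ≤ -log (2 ν)`, and by the
layer-cake formula `∫_{t > x} φ h = φ x G x + ∫_{s > x} φ' G` (for nondecreasing `φ`) the tail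
moments of `h` beyond `x` are dominated by those of an exponential law of rate `c`. The first
moment on each side of `w` (the left one by reflection) is at most `1 / (2c)`, so
`|μ - w| ≤ 1 / (2c)`, and `(t - μ)² ≤ (t - w + 1 / (2c))²` on the tail; the second exponential
moment then gives `ν ((u + 3/2)² + 1) / c²` with `u = c (x - w)`, which is at most
`5 ν (log ν)² / c²` once `ν < 1/6`.
-/

open MeasureTheory

def LogConcaveFn (h : ℝ → ℝ) : Prop :=
  (∀ x, 0 ≤ h x) ∧
  ∀ x y l : ℝ, 0 < l → l < 1 → h x ^ (1 - l) * h y ^ l ≤ h ((1 - l) * x + l * y)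

open Set Filter Topology
open scoped ENNReal

/-- A discrete Grönwall argument: iterate the hypothesis over `n` equal steps and let `n → ∞`. -/
theorem mul_exp_le_of_mul_one_add_le {F : ℝ → ℝ} {a c : ℝ} (hc : 0 ≤ c)
    (hF : ∀ p q, a ≤ p → p ≤ q → F q * (1 + c * (q - p)) ≤ F p) {p q : ℝ}
    (hap : a ≤ p) (hpq : p ≤ q) : F q * Real.exp (c * (q - p)) ≤ F p := by
  have hsteps (δ : ℝ) (hδ : 0 ≤ δ) (k : ℕ) : F (p + k * δ) * (1 + c * δ) ^ k ≤ F p := by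
    induction k with
    | zero => simp
    | succ k ih =>
      have hstep : F (p + k * δ + δ) * (1 + c * δ) ≤ F (p + k * δ) := by
        simpa using hF (p + k * δ) (p + k * δ + δ) (by nlinarith) (by linarith)
      calc F (p + (k + 1 : ℕ) * δ) * (1 + c * δ) ^ (k + 1)
          = F (p + k * δ + δ) * (1 + c * δ) * (1 + c * δ) ^ k := by push_cast; ring_nf
        _ ≤ F (p + k * δ) * (1 + c * δ) ^ k := by gcongr
        _ ≤ F p := ih
  have hlim : Tendsto (fun n : ℕ => F q * (1 + c * (q - p) / n) ^ n) atTop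
      (𝓝 (F q * Real.exp (c * (q - p)))) :=
    (Real.tendsto_one_add_div_pow_exp _).const_mul _
  refine le_of_tendsto hlim (eventually_atTop.mpr ⟨1, fun n hn => ?_⟩)
  have hn : (n : ℝ) ≠ 0 := by positivity
  simpa [mul_div_cancel₀ _ hn, mul_div_assoc] using
    hsteps ((q - p) / n) (div_nonneg (by linarith) n.cast_nonneg) n

theorem integrableOn_and_integral_Ioi_affine_mul_exp {α β c x : ℝ} (hα : 0 ≤ α) (hβ : 0 ≤ β)
    (hc : 0 < c) :
    IntegrableOn (fun s => (α * (s - x) + β) * Real.exp (-(c * (s - x)))) (Ioi x) ∧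
      ∫ s in Ioi x, (α * (s - x) + β) * Real.exp (-(c * (s - x))) = α / c ^ 2 + β / c := by
  set F : ℝ → ℝ := fun s => -((α * (s - x) + β) / c + α / c ^ 2) * Real.exp (-(c * (s - x)))
  have hF (s : ℝ) : HasDerivAt F ((α * (s - x) + β) * Real.exp (-(c * (s - x)))) s := by
    have := ((((hasDerivAt_id s).sub_const x).const_mul α).add_const β |>.div_const c
      |>.add_const (α / c ^ 2) |>.neg).mul
      (((hasDerivAt_id s).sub_const x).const_mul c).neg.exp
    refine (this.congr_of_eventuallyEq (.of_eq ?_)).congr_deriv ?_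
    · ext t; simp [F]
    · simp only [Pi.neg_apply, id]
      field_simp
      ring
  have hlim : Tendsto F atTop (𝓝 0) := by
    have hu : Tendsto (fun s => c * (s - x)) atTop atTop :=
      (tendsto_id.atTop_add tendsto_const_nhds).const_mul_atTop hc
    have hexp : Tendsto (fun u : ℝ => -(α / c ^ 2) * (u ^ 1 * Real.exp (-u))
        - (β / c + α / c ^ 2) * (u ^ 0 * Real.exp (-u))) atTop (𝓝 0) := by
      simpa using
        ((Real.tendsto_pow_mul_exp_neg_atTop_nhds_zero 1).const_mul (-(α / c ^ 2))).sub
          ((Real.tendsto_pow_mul_exp_neg_atTop_nhds_zero 0).const_mul (β / c + α / c ^ 2))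
    convert hexp.comp hu using 1
    ext s
    simp only [F, Function.comp_apply]
    field_simp
    ring
  have hpos : ∀ s ∈ Ioi x, 0 ≤ (α * (s - x) + β) * Real.exp (-(c * (s - x))) := fun s hs =>
    mul_nonneg (add_nonneg (mul_nonneg hα (sub_nonneg.mpr (le_of_lt hs))) hβ) (Real.exp_pos _).le
  have hint := integrableOn_Ioi_deriv_of_nonneg' (fun s _ => hF s) hpos hlim
  refine ⟨hint, ?_⟩
  rw [integral_Ioi_of_hasDerivAt_of_tendsto' (fun s _ => hF s) hint hlim]
  simp only [F, sub_self, mul_zero, neg_zero, Real.exp_zero, mul_one]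
  ring

theorem IntegrableOn.of_comp_neg_Ioi {f : ℝ → ℝ} {c : ℝ}
    (hf : IntegrableOn (fun t => f (-t)) (Ioi c)) : IntegrableOn f (Iic (-c)) := by
  have := (Measure.measurePreserving_neg (volume : Measure ℝ)).integrableOn_comp_preimage
    (Homeomorph.neg ℝ).measurableEmbedding (f := f) (s := Iic (-c))
  rw [neg_preimage, neg_Iic, neg_neg] at this
  exact this.mp (by rw [integrableOn_Ici_iff_integrableOn_Ioi]; exact hf)

theorem lintegral_Ioi_lintegral_Ioo_mul {f g : ℝ → ℝ≥0∞} (hf : AEMeasurable f)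
    (hg : Measurable g) (x : ℝ) :
    ∫⁻ t in Ioi x, (∫⁻ s in Ioo x t, g s) * f t = ∫⁻ s in Ioi x, g s * ∫⁻ t in Ioi s, f t := by
  set K : ℝ → ℝ → ℝ≥0∞ := fun t s =>
    {p : ℝ × ℝ | x < p.2 ∧ p.2 < p.1}.indicator (fun p => g p.2 * f p.1) (t, s)
  have hK : AEMeasurable (Function.uncurry K) (volume.prod volume) :=
    (hg.comp measurable_snd).aemeasurable.mul hf.comp_fst |>.indicator
      ((measurableSet_lt measurable_const measurable_snd).inter
        (measurableSet_lt measurable_snd measurable_fst))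
  have hleft (t : ℝ) :
      (Ioi x).indicator (fun t => (∫⁻ s in Ioo x t, g s) * f t) t = ∫⁻ s, K t s := by
    by_cases ht : x < t
    · rw [indicator_of_mem (mem_Ioi.mpr ht), ← lintegral_mul_const _ hg,
        ← lintegral_indicator measurableSet_Ioo]
      rfl
    · have hK0 (s : ℝ) : K t s = 0 := indicator_of_notMem (fun hs => ht (hs.1.trans hs.2)) _
      simp [indicator_of_notMem (notMem_Ioi.mpr (not_lt.mp ht)), hK0]
  have hright (s : ℝ) :
      (Ioi x).indicator (fun s => g s * ∫⁻ t in Ioi s, f t) s = ∫⁻ t, K t s := by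
    by_cases hs : x < s
    · rw [indicator_of_mem (mem_Ioi.mpr hs), ← lintegral_const_mul'' _ hf.restrict,
        ← lintegral_indicator measurableSet_Ioi]
      congr 1 with t
      simp [K, indicator, hs]
    · simp [K, indicator, hs]
  rw [← lintegral_indicator measurableSet_Ioi, ← lintegral_indicator measurableSet_Ioi]
  simp_rw [hleft, hright]
  exact lintegral_lintegral_swap hK

section TailMass

variable {h : ℝ → ℝ}

theorem lintegral_Ioi_sub_mul_eq {φ φ' : ℝ → ℝ} {x : ℝ} (hnn : ∀ t, 0 ≤ h t)
    (hi : Integrable h) (hφ : ∀ t, HasDerivAt φ (φ' t) t) (hφ' : Continuous φ')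
    (hφ'nn : ∀ s, x ≤ s → 0 ≤ φ' s) :
    ∫⁻ t in Ioi x, ENNReal.ofReal ((φ t - φ x) * h t)
      = ∫⁻ s in Ioi x, ENNReal.ofReal (φ' s * ∫ t in Ioi s, h t) := by
  have hincr (t : ℝ) (ht : x < t) :
      ENNReal.ofReal (φ t - φ x) = ∫⁻ s in Ioo x t, ENNReal.ofReal (φ' s) := by
    rw [← intervalIntegral.integral_eq_sub_of_hasDerivAt (fun s _ => hφ s)
      (hφ'.intervalIntegrable x t), intervalIntegral.integral_of_le ht.le,
      integral_Ioc_eq_integral_Ioo]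
    exact ofReal_integral_eq_lintegral_ofReal
      (hφ'.integrableOn_Icc.mono_set Ioo_subset_Icc_self)
      (ae_restrict_of_forall_mem measurableSet_Ioo fun s hs => hφ'nn s hs.1.le)
  have htail (s : ℝ) :
      ENNReal.ofReal (∫ t in Ioi s, h t) = ∫⁻ t in Ioi s, ENNReal.ofReal (h t) :=
    ofReal_integral_eq_lintegral_ofReal hi.integrableOn (.of_forall fun t => hnn t)
  calc ∫⁻ t in Ioi x, ENNReal.ofReal ((φ t - φ x) * h t)
      = ∫⁻ t in Ioi x, (∫⁻ s in Ioo x t, ENNReal.ofReal (φ' s)) * ENNReal.ofReal (h t) :=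
        setLIntegral_congr_fun measurableSet_Ioi fun t ht => by
          rw [ENNReal.ofReal_mul' (hnn t), hincr t ht]
    _ = ∫⁻ s in Ioi x, ENNReal.ofReal (φ' s) * ∫⁻ t in Ioi s, ENNReal.ofReal (h t) :=
        lintegral_Ioi_lintegral_Ioo_mul hi.1.aemeasurable.ennreal_ofReal
          hφ'.measurable.ennreal_ofReal x
    _ = ∫⁻ s in Ioi x, ENNReal.ofReal (φ' s * ∫ t in Ioi s, h t) :=
        setLIntegral_congr_fun measurableSet_Ioi fun s hs => by
          rw [ENNReal.ofReal_mul (hφ'nn s (le_of_lt hs)), htail]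

theorem integrableOn_Ioi_mul_and_integral_le {φ φ' b : ℝ → ℝ} {x : ℝ} (hnn : ∀ t, 0 ≤ h t)
    (hi : Integrable h) (hφ : ∀ t, HasDerivAt φ (φ' t) t) (hφ' : Continuous φ')
    (hφ'nn : ∀ s, x ≤ s → 0 ≤ φ' s) (hb : IntegrableOn b (Ioi x))
    (hφb : ∀ s, x < s → φ' s * ∫ t in Ioi s, h t ≤ b s) :
    IntegrableOn (fun t => φ t * h t) (Ioi x) ∧
      ∫ t in Ioi x, φ t * h t ≤ φ x * (∫ t in Ioi x, h t) + ∫ s in Ioi x, b s := by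
  have hφc : Continuous φ := continuous_iff_continuousAt.mpr fun t => (hφ t).continuousAt
  have hbnn (s : ℝ) (hs : x < s) : 0 ≤ b s :=
    (mul_nonneg (hφ'nn s hs.le) (setIntegral_nonneg measurableSet_Ioi fun t _ => hnn t)).trans
      (hφb s hs)
  have hexcess_nn : 0 ≤ᵐ[volume.restrict (Ioi x)] fun t => (φ t - φ x) * h t := by
    refine ae_restrict_of_forall_mem measurableSet_Ioi fun t ht => mul_nonneg ?_ (hnn t)
    rw [← intervalIntegral.integral_eq_sub_of_hasDerivAt (fun s _ => hφ s)
      (hφ'.intervalIntegrable x t)]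
    exact intervalIntegral.integral_nonneg (le_of_lt ht) fun s hs => hφ'nn s hs.1
  have hlin : ∫⁻ t in Ioi x, ENNReal.ofReal ((φ t - φ x) * h t)
      ≤ ENNReal.ofReal (∫ s in Ioi x, b s) := by
    rw [lintegral_Ioi_sub_mul_eq hnn hi hφ hφ' hφ'nn, ofReal_integral_eq_lintegral_ofReal hb
      (ae_restrict_of_forall_mem measurableSet_Ioi hbnn)]
    exact setLIntegral_mono' measurableSet_Ioi fun s hs => ENNReal.ofReal_le_ofReal (hφb s hs)
  have hexcess : IntegrableOn (fun t => (φ t - φ x) * h t) (Ioi x) :=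
    ⟨(hφc.sub continuous_const).aestronglyMeasurable.mul hi.1.restrict,
      (hasFiniteIntegral_iff_ofReal hexcess_nn).mpr (hlin.trans_lt ENNReal.ofReal_lt_top)⟩
  have hexcess_le : ∫ t in Ioi x, (φ t - φ x) * h t ≤ ∫ s in Ioi x, b s := by
    rwa [← ofReal_integral_eq_lintegral_ofReal hexcess hexcess_nn,
      ENNReal.ofReal_le_ofReal_iff (setIntegral_nonneg measurableSet_Ioi hbnn)] at hlin
  have hsplit : (fun t => φ t * h t) = fun t => (φ t - φ x) * h t + φ x * h t := by
    ext t; ring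
  refine ⟨hsplit ▸ hexcess.add (hi.integrableOn.const_mul _), ?_⟩
  rw [hsplit, integral_add hexcess (hi.integrableOn.const_mul _), integral_const_mul]
  linarith

theorem integral_Ioi_anti (hnn : ∀ t, 0 ≤ h t) (hi : Integrable h) {p q : ℝ} (hpq : p ≤ q) :
    ∫ t in Ioi q, h t ≤ ∫ t in Ioi p, h t :=
  setIntegral_mono_set hi.integrableOn (.of_forall fun t => hnn t)
    (Ioi_subset_Ioi hpq).eventuallyLE

def HazardBoundedBelow (h : ℝ → ℝ) (a c : ℝ) : Prop :=
  ∀ s, a ≤ s → c * ∫ t in Ioi s, h t ≤ h s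

variable {a c : ℝ}

theorem HazardBoundedBelow.integral_Ioi_mul_one_add_le (hhaz : HazardBoundedBelow h a c)
    (hnn : ∀ t, 0 ≤ h t) (hi : Integrable h) (hc : 0 ≤ c) {p q : ℝ} (hap : a ≤ p)
    (hpq : p ≤ q) :
    (∫ t in Ioi q, h t) * (1 + c * (q - p)) ≤ ∫ t in Ioi p, h t := by
  have hmass : c * (∫ t in Ioi q, h t) * (q - p) ≤ ∫ t in p..q, h t := by
    rw [intervalIntegral.integral_of_le hpq]
    convert setIntegral_ge_of_const_le_real measurableSet_Ioc measure_Ioc_lt_top.ne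
      (fun s hs => (mul_le_mul_of_nonneg_left (integral_Ioi_anti hnn hi hs.2) hc).trans
        (hhaz s (hap.trans hs.1.le))) hi.integrableOn using 2
    simp [hpq]
  rw [← intervalIntegral.integral_Ioi_sub_Ioi hi.integrableOn hpq] at hmass
  linarith

theorem HazardBoundedBelow.integral_Ioi_le_mul_exp (hhaz : HazardBoundedBelow h a c)
    (hnn : ∀ t, 0 ≤ h t) (hi : Integrable h) (hc : 0 ≤ c) {p q : ℝ} (hap : a ≤ p)
    (hpq : p ≤ q) :
    ∫ t in Ioi q, h t ≤ (∫ t in Ioi p, h t) * Real.exp (-(c * (q - p))) := by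
  rw [Real.exp_neg, ← div_eq_mul_inv, le_div_iff₀ (Real.exp_pos _)]
  exact mul_exp_le_of_mul_one_add_le hc
    (fun p q hp hpq => hhaz.integral_Ioi_mul_one_add_le hnn hi hc hp hpq) hap hpq

theorem HazardBoundedBelow.integrableOn_and_integral_Ioi_sub_mul_le
    (hhaz : HazardBoundedBelow h a c) (hnn : ∀ t, 0 ≤ h t) (hi : Integrable h) (hc : 0 < c) :
    IntegrableOn (fun t => (t - a) * h t) (Ioi a) ∧
      ∫ t in Ioi a, (t - a) * h t ≤ (∫ t in Ioi a, h t) / c := by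
  have hG : 0 ≤ ∫ t in Ioi a, h t := setIntegral_nonneg measurableSet_Ioi fun t _ => hnn t
  obtain ⟨hb, hbint⟩ := integrableOn_and_integral_Ioi_affine_mul_exp le_rfl hG hc (x := a)
  obtain ⟨hint, hle⟩ := integrableOn_Ioi_mul_and_integral_le (φ := fun t => t - a)
    (φ' := fun _ => 1) hnn hi (fun t => (hasDerivAt_id t).sub_const a) continuous_const
    (fun _ _ => zero_le_one) hb fun s hs => by
      simpa using hhaz.integral_Ioi_le_mul_exp hnn hi hc.le le_rfl (le_of_lt hs)
  refine ⟨hint, hle.trans_eq ?_⟩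
  rw [hbint]
  ring

theorem HazardBoundedBelow.integrableOn_and_integral_Ioi_sq_mul_le
    (hhaz : HazardBoundedBelow h a c) (hnn : ∀ t, 0 ≤ h t) (hi : Integrable h) (hc : 0 < c)
    {m x : ℝ} (hax : a ≤ x) (hmx : m ≤ x) :
    IntegrableOn (fun t => (t - m) ^ 2 * h t) (Ioi x) ∧
      ∫ t in Ioi x, (t - m) ^ 2 * h t ≤
        (∫ t in Ioi x, h t) * ((x - m) ^ 2 + 2 * (x - m) / c + 2 / c ^ 2) := by
  set G := ∫ t in Ioi x, h t
  have hG : 0 ≤ G := setIntegral_nonneg measurableSet_Ioi fun t _ => hnn t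
  obtain ⟨hb, hbint⟩ := integrableOn_and_integral_Ioi_affine_mul_exp
    (by positivity : 0 ≤ 2 * G) (by nlinarith : 0 ≤ 2 * G * (x - m)) hc (x := x)
  obtain ⟨hint, hle⟩ := integrableOn_Ioi_mul_and_integral_le (φ := fun t => (t - m) ^ 2)
    (φ' := fun s => 2 * (s - m)) hnn hi
    (fun t => by simpa using ((hasDerivAt_id t).sub_const m).fun_pow 2) (by fun_prop)
    (fun s hs => by linarith) hb fun s hs => by
      calc 2 * (s - m) * ∫ t in Ioi s, h t ≤ 2 * (s - m) * (G * Real.exp (-(c * (s - x)))) :=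
            mul_le_mul_of_nonneg_left (hhaz.integral_Ioi_le_mul_exp hnn hi hc.le hax hs.le)
              (by linarith)
        _ = _ := by ring
  refine ⟨hint, hle.trans_eq ?_⟩
  rw [hbint]
  field_simp
  ring

end TailMass

namespace LogConcaveFn

variable {h : ℝ → ℝ}

theorem comp_neg (hlc : LogConcaveFn h) : LogConcaveFn fun t => h (-t) :=
  ⟨fun t => hlc.1 (-t), fun x y l hl0 hl1 => by
    simpa only [mul_neg, neg_add] using hlc.2 (-x) (-y) l hl0 hl1⟩

theorem apply_mul_apply_add_sub_le (hlc : LogConcaveFn h) {a b c : ℝ} (hab : a ≤ b)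
    (hac : a ≤ c) : h a * h (b + c - a) ≤ h b * h c := by
  rcases hab.eq_or_lt with rfl | hab
  · simp
  rcases hac.eq_or_lt with rfl | hac
  · simp [mul_comm]
  set d := b + c - a
  set l := (b - a) / (d - a)
  have hda : 0 < d - a := by simp only [d]; linarith
  have hl0 : 0 < l := div_pos (by linarith) hda
  have hl1 : l < 1 := (div_lt_one hda).mpr (by simp only [d]; linarith)
  have hb : (1 - l) * a + l * d = b := by simp only [l]; field_simp; ring
  have hc : (1 - l) * d + l * a = c := by simp only [l]; field_simp; simp only [d]; ring
  have hsplit (u : ℝ) (hu : 0 ≤ u) : u = u ^ (1 - l) * u ^ l := by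
    rw [← Real.rpow_add' hu (by norm_num), sub_add_cancel, Real.rpow_one]
  calc h a * h d
      = (h a ^ (1 - l) * h d ^ l) * (h d ^ (1 - l) * h a ^ l) := by
        nth_rw 1 [hsplit (h a) (hlc.1 a), hsplit (h d) (hlc.1 d)]; ring
    _ ≤ h b * h c :=
        mul_le_mul (hb ▸ hlc.2 a d l hl0 hl1) (hc ▸ hlc.2 d a l hl0 hl1)
          (mul_nonneg (Real.rpow_nonneg (hlc.1 d) _) (Real.rpow_nonneg (hlc.1 a) _)) (hlc.1 b)

theorem mul_integral_Ioi_le (hlc : LogConcaveFn h) (hi : Integrable h) {p q : ℝ}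
    (hpq : p ≤ q) : h p * ∫ s in Ioi q, h s ≤ h q * ∫ s in Ioi p, h s := by
  have hshift : ∫ s in Ioi q, h (s + (p - q)) = ∫ s in Ioi p, h s := by
    simpa only [preimage_add_const_Ioi, sub_sub_cancel] using
      (measurePreserving_add_right volume (p - q)).setIntegral_preimage_emb
        (measurableEmbedding_addRight (p - q)) h (Ioi p)
  rw [← integral_const_mul, ← hshift, ← integral_const_mul]
  refine setIntegral_mono_on (hi.integrableOn.const_mul _)
    ((hi.comp_add_right (p - q)).integrableOn.const_mul _) measurableSet_Ioi fun s hs => ?_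
  simpa [show q + (s + (p - q)) - p = s by ring] using
    hlc.apply_mul_apply_add_sub_le hpq (show p ≤ s + (p - q) by linarith [mem_Ioi.mp hs])

theorem hazardBoundedBelow_of_integral_Ioi_eq_half (hlc : LogConcaveFn h) (hi : Integrable h)
    {w : ℝ} (hGw : ∫ t in Ioi w, h t = 1 / 2) : HazardBoundedBelow h w (2 * h w) := by
  intro s hws
  have := hlc.mul_integral_Ioi_le hi hws
  rw [hGw] at this
  linarith

theorem integrable_and_abs_integral_mul_sub_le (hlc : LogConcaveFn h) (hi : Integrable h)
    (h1 : ∫ t, h t = 1) {w : ℝ} (hw : ∫ t in Iic w, h t = 1 / 2)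
    (hGw : ∫ t in Ioi w, h t = 1 / 2) (hwpos : 0 < h w) :
    Integrable (fun t => t * h t) ∧ |(∫ t, t * h t) - w| ≤ 1 / (4 * h w) := by
  have hGw' : ∫ t in Ioi (-w), h (-t) = 1 / 2 := by rw [integral_comp_neg_Ioi, neg_neg, hw]
  obtain ⟨hRint, hR⟩ := (hlc.hazardBoundedBelow_of_integral_Ioi_eq_half hi hGw
    ).integrableOn_and_integral_Ioi_sub_mul_le hlc.1 hi (by positivity)
  obtain ⟨hLint, hL⟩ := (hlc.comp_neg.hazardBoundedBelow_of_integral_Ioi_eq_half hi.comp_neg hGw'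
    ).integrableOn_and_integral_Ioi_sub_mul_le hlc.comp_neg.1 hi.comp_neg (by simpa using hwpos)
  simp only [neg_neg, hGw, hGw'] at hR hL
  have hR0 : 0 ≤ ∫ t in Ioi w, (t - w) * h t := setIntegral_nonneg measurableSet_Ioi
    fun t ht => mul_nonneg (sub_nonneg.mpr (le_of_lt ht)) (hlc.1 t)
  have hL0 : 0 ≤ ∫ t in Ioi (-w), (t - -w) * h (-t) := setIntegral_nonneg measurableSet_Ioi
    fun t ht => mul_nonneg (sub_nonneg.mpr (le_of_lt ht)) (hlc.1 (-t))
  have hLint' : IntegrableOn (fun t => (t - w) * h t) (Iic w) := by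
    have := IntegrableOn.of_comp_neg_Ioi (f := fun t => (t - w) * h t) (c := -w)
      (hLint.neg.congr_fun (fun t _ => by simp only [Pi.neg_apply]; ring) measurableSet_Ioi)
    rwa [neg_neg] at this
  have hint : Integrable (fun t => (t - w) * h t) := by
    rw [← integrableOn_univ, ← Iic_union_Ioi (a := w)]
    exact hLint'.union hRint
  have hleft : ∫ t in Iic w, (t - w) * h t = -∫ t in Ioi (-w), (t - -w) * h (-t) := by
    rw [← neg_neg w, ← integral_comp_neg_Ioi, ← integral_neg, neg_neg]
    congr 1 with t
    ring
  have hmean : ∫ t, t * h t = (∫ t, (t - w) * h t) + w := by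
    calc ∫ t, t * h t = ∫ t, ((t - w) * h t + w * h t) := by congr 1 with t; ring
      _ = (∫ t, (t - w) * h t) + w := by
        rw [integral_add hint (hi.const_mul w), integral_const_mul, h1, mul_one]
  refine ⟨(hint.add (hi.const_mul w)).congr
    (.of_forall fun t => by simp only [Pi.add_apply]; ring), ?_⟩
  rw [hmean, ← intervalIntegral.integral_Iic_add_Ioi hLint' hRint, hleft, abs_le]
  have hc : 1 / 2 / (2 * h w) = 1 / (4 * h w) := by ring
  constructor <;> linarith

end LogConcaveFn

theorem exp_tail_sq_moment_le_log_sq {c ν w x : ℝ} (hc : 0 < c) (hν : 0 < ν) (hν6 : ν < 1 / 6)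
    (hwx : w ≤ x) (htail : ν ≤ 1 / 2 * Real.exp (-(c * (x - w)))) :
    ν * ((x - (w - 1 / (2 * c))) ^ 2 + 2 * (x - (w - 1 / (2 * c))) / c + 2 / c ^ 2) ≤
      5 * ν / c ^ 2 * Real.log ν ^ 2 := by
  set u := c * (x - w)
  have hu0 : 0 ≤ u := mul_nonneg hc.le (sub_nonneg.mpr hwx)
  have hu : u ≤ -Real.log ν - Real.log 2 := by
    have := Real.log_le_log hν htail
    rw [Real.log_mul (by norm_num) (Real.exp_pos _).ne', Real.log_exp, one_div, Real.log_inv]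
      at this
    linarith
  have hlogν : 1 ≤ -Real.log ν := by
    have h6 : 6 < ν⁻¹ := by rw [lt_inv_comm₀ (by norm_num) hν]; linarith
    rw [← Real.log_inv, Real.le_log_iff_exp_le (by positivity)]
    linarith [Real.exp_one_lt_d9]
  have hlog2 := Real.log_two_gt_d9
  calc ν * ((x - (w - 1 / (2 * c))) ^ 2 + 2 * (x - (w - 1 / (2 * c))) / c + 2 / c ^ 2)
      = ν / c ^ 2 * ((u + 3 / 2) ^ 2 + 1) := by simp only [u]; field_simp; ring
    _ ≤ ν / c ^ 2 * (5 * Real.log ν ^ 2) := by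
        gcongr
        nlinarith
    _ = 5 * ν / c ^ 2 * Real.log ν ^ 2 := by ring

theorem logconcave_sq_moment_tail_general
    (h : ℝ → ℝ) (hlc : LogConcaveFn h)
    (hi : Integrable h) (h1 : ∫ x, h x = 1)
    (w μ : ℝ) (hw : ∫ x in Set.Iic w, h x = 1 / 2) (hwpos : 0 < h w)
    (hμ : μ = ∫ t, t * h t)
    (x ν : ℝ) (hν : ∫ t in Set.Ioi x, h t = ν)
    (hνpos : 0 < ν) (hνlt : ν < 1 / 6) :
    ∫ t in Set.Ioi x, (t - μ) ^ 2 * h t ≤ 5 * ν / (4 * h w ^ 2) * (Real.log ν) ^ 2 := by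
  have hGw : ∫ t in Ioi w, h t = 1 / 2 := by
    linarith [intervalIntegral.integral_Iic_add_Ioi (b := w) hi.integrableOn hi.integrableOn]
  obtain ⟨-, hμw⟩ := hlc.integrable_and_abs_integral_mul_sub_le hi h1 hw hGw hwpos
  rw [← hμ] at hμw
  set c := 2 * h w
  have hc : 0 < c := by positivity
  have hhaz := hlc.hazardBoundedBelow_of_integral_Ioi_eq_half hi hGw
  have hwx : w ≤ x := by
    by_contra! hxw
    linarith [integral_Ioi_anti hlc.1 hi hxw.le]
  have htail : ν ≤ 1 / 2 * Real.exp (-(c * (x - w))) := by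
    simpa only [hν, hGw] using hhaz.integral_Ioi_le_mul_exp hlc.1 hi hc.le le_rfl hwx
  have hμm : |μ - w| ≤ 1 / (2 * c) := hμw.trans_eq (by ring)
  obtain ⟨hint, hbound⟩ := hhaz.integrableOn_and_integral_Ioi_sq_mul_le hlc.1 hi hc hwx
    (m := w - 1 / (2 * c)) (by linarith [show 0 < 1 / (2 * c) by positivity])
  have hcomp (t : ℝ) (ht : x < t) : (t - μ) ^ 2 ≤ (t - (w - 1 / (2 * c))) ^ 2 := by
    obtain ⟨h₁, h₂⟩ := abs_le.mp hμm
    exact sq_le_sq' (by linarith) (by linarith)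
  calc ∫ t in Ioi x, (t - μ) ^ 2 * h t ≤ ∫ t in Ioi x, (t - (w - 1 / (2 * c))) ^ 2 * h t :=
        integral_mono_of_nonneg (.of_forall fun t => mul_nonneg (sq_nonneg _) (hlc.1 t)) hint
          (ae_restrict_of_forall_mem measurableSet_Ioi fun t ht =>
            mul_le_mul_of_nonneg_right (hcomp t ht) (hlc.1 t))
    _ ≤ ν * ((x - (w - 1 / (2 * c))) ^ 2 + 2 * (x - (w - 1 / (2 * c))) / c + 2 / c ^ 2) :=
        hν ▸ hbound
    _ ≤ 5 * ν / c ^ 2 * Real.log ν ^ 2 := exp_tail_sq_moment_le_log_sq hc hνpos hνlt hwx htail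
    _ = 5 * ν / (4 * h w ^ 2) * Real.log ν ^ 2 := by ring

theorem logconcave_sq_moment_tail
    (h : ℝ → ℝ) (hlc : LogConcaveFn h)
    (hi : Integrable h) (h1 : ∫ x, h x = 1)
    (w μ : ℝ) (hw : ∫ x in Set.Iic w, h x = 1 / 2) (hwpos : 0 < h w)
    (hmi : Integrable (fun t => t * h t))
    (hμ : μ = ∫ t, t * h t)
    (x ν : ℝ) (hν : ∫ t in Set.Ioi x, h t = ν)
    (hνpos : 0 < ν) (hνlt : ν < 1 / 6) :
    ∫ t in Set.Ioi x, (t - μ) ^ 2 * h t ≤ 5 * ν / (4 * h w ^ 2) * (Real.log ν) ^ 2 :=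
  logconcave_sq_moment_tail_general h hlc hi h1 w μ hw hwpos hμ x ν hν hνpos hνlt
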